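/- arXiv:2210.02920 — 4 statements merged into one kernel-verified Lean document; each statement's English description precedes it below -/
import Mathlib

section
/- Under the change of variables X(ξ) = m ξ^{-2} f(ξ)^{m-1}, Y(ξ) = m ξ^{-1} f(ξ)^{m-2} f'(ξ), and η(ξ) = (1/m)∫_0^ξ ζ / f^{m-1}(ζ) dζ, a positive C² solution f of the profile ODE (f^m)'' + ((N-1)/ξ)(f^m)' - α f + β ξ f' + ξ^{σ} f^p = 0 with σ = -2(p-1)/(m-1) gives rise to a solution (X,Y) of the autonomous system dX/dη = X[(m-1)Y - 2X], dY/dη = -Y² - βY + αX - NXY - m^{(1-p)/(m-1)} X^{(m+p-2)/(m-1)}. -/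
open Real Filter Topology Set

/-!
With `g = f^m`, one has `X = m f^{m-1}/ξ²` and `Y = g'/(ξ f)`, and the time factor
`dξ/dη = m f^{m-1}/ξ` equals `ξ X`. Logarithmic differentiation of `X` gives the first equation.
The quotient rule for `Y` gives `ξ X Y' = X g''/f - XY - Y²`; substituting `g''` from the profile
equation gives the second, where the reaction term `ξ^σ f^p` becomes a power of `X` precisely
because `σ = -2(p-1)/(m-1)`.
-/

noncomputable section

def phaseX (m : ℝ) (f : ℝ → ℝ) (ξ : ℝ) : ℝ := m * ξ ^ (-2 : ℝ) * f ξ ^ (m - 1)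

def phaseY (m : ℝ) (f : ℝ → ℝ) (ξ : ℝ) : ℝ := m * ξ ^ (-1 : ℝ) * f ξ ^ (m - 2) * deriv f ξ

end

section PhaseVariables

variable {m p σ : ℝ} {f : ℝ → ℝ} {ξ : ℝ}

lemma phaseX_eq_div (m : ℝ) (f : ℝ → ℝ) (ξ : ℝ) : phaseX m f ξ = m * f ξ ^ (m - 1) / ξ ^ 2 := by
  rw [phaseX, show (-2 : ℝ) = ((-2 : ℤ) : ℝ) by norm_num, rpow_intCast, zpow_neg, zpow_ofNat]
  ring

lemma phaseY_eq_div (hfξ : 0 < f ξ) :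
    phaseY m f ξ = deriv f ξ * m * f ξ ^ (m - 1) / (ξ * f ξ) := by
  rw [phaseY, rpow_neg_one, show m - 2 = m - 1 - 1 by ring, rpow_sub_one hfξ.ne']
  field_simp

lemma phaseY_eq_deriv_rpow_div (hfξ : 0 < f ξ) (hf : DifferentiableAt ℝ f ξ) :
    phaseY m f ξ = deriv (fun s => f s ^ m) ξ / (ξ * f ξ) := by
  rw [phaseY_eq_div hfξ, deriv_rpow_const hf (.inl hfξ.ne')]

lemma phaseX_deriv_mul (hξ : 0 < ξ) (hfξ : 0 < f ξ) (hf : DifferentiableAt ℝ f ξ) :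
    deriv (phaseX m f) ξ * (m * f ξ ^ (m - 1) / ξ) =
      phaseX m f ξ * ((m - 1) * phaseY m f ξ - 2 * phaseX m f ξ) := by
  have hX : HasDerivAt (phaseX m f)
      ((m * (deriv f ξ * (m - 1) * f ξ ^ (m - 1 - 1)) * ξ ^ 2 - m * f ξ ^ (m - 1) * (2 * ξ))
        / (ξ ^ 2) ^ 2) ξ := by
    rw [show phaseX m f = fun s => m * f s ^ (m - 1) / s ^ 2 from funext (phaseX_eq_div m f)]
    have := ((hf.hasDerivAt.rpow_const (p := m - 1) (.inl hfξ.ne')).const_mul m).fun_div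
      (hasDerivAt_pow 2 ξ) (by positivity)
    simpa using this
  rw [hX.deriv, phaseX_eq_div, phaseY_eq_div hfξ, rpow_sub_one hfξ.ne']
  field_simp

lemma phaseY_deriv_mul (hξ : 0 < ξ) (hfξ : 0 < f ξ) (hf : DifferentiableAt ℝ f ξ)
    (hg : DifferentiableAt ℝ (deriv fun s => f s ^ m) ξ)
    (hY : phaseY m f =ᶠ[𝓝 ξ] fun s => deriv (fun t => f t ^ m) s / (s * f s)) :
    deriv (phaseY m f) ξ * (m * f ξ ^ (m - 1) / ξ) =
      phaseX m f ξ * deriv (deriv fun s => f s ^ m) ξ / f ξ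
        - phaseX m f ξ * phaseY m f ξ - phaseY m f ξ ^ 2 := by
  have hv : HasDerivAt (fun s => s * f s) (1 * f ξ + ξ * deriv f ξ) ξ :=
    (hasDerivAt_id ξ).mul hf.hasDerivAt
  have hquot := hg.hasDerivAt.fun_div hv (by positivity)
  rw [hY.deriv_eq, hquot.deriv, hY.eq_of_nhds, phaseX_eq_div,
    deriv_rpow_const hf (.inl hfξ.ne')]
  field_simp
  ring

lemma phaseX_mul_reaction (hm : 1 < m) (hσ : σ = -2 * (p - 1) / (m - 1)) (hξ : 0 < ξ)
    (hfξ : 0 < f ξ) :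
    phaseX m f ξ * (ξ ^ σ * f ξ ^ p / f ξ) =
      m ^ ((1 - p) / (m - 1)) * phaseX m f ξ ^ ((m + p - 2) / (m - 1)) := by
  have hm1 : m - 1 ≠ 0 := by linarith
  have hm_exp : m ^ ((1 - p) / (m - 1)) * m ^ ((m + p - 2) / (m - 1)) = m := by
    rw [← rpow_add (by linarith), ← add_div, show 1 - p + (m + p - 2) = m - 1 by ring,
      div_self hm1, rpow_one]
  have hξ_exp : ξ ^ (-2 * ((m + p - 2) / (m - 1))) = ξ ^ (-2 : ℝ) * ξ ^ σ := by
    rw [← rpow_add hξ, hσ]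
    congr 1
    field_simp
    ring
  have hf_exp : f ξ ^ ((m - 1) * ((m + p - 2) / (m - 1))) = f ξ ^ (m - 1) * f ξ ^ p / f ξ := by
    rw [mul_div_cancel₀ _ hm1, show m + p - 2 = m - 1 + p - 1 by ring, rpow_sub_one hfξ.ne',
      rpow_add hfξ]
  rw [phaseX, mul_rpow (by positivity) (by positivity), mul_rpow (by linarith) (by positivity),
    ← rpow_mul hξ.le, ← rpow_mul hfξ.le, hξ_exp, hf_exp]
  linear_combination (-(ξ ^ (-2 : ℝ) * ξ ^ σ * (f ξ ^ (m - 1) * f ξ ^ p / f ξ))) * hm_exp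

lemma differentiableAt_deriv_rpow (hf : ContDiffOn ℝ 2 f (Ioi 0)) (hpos : ∀ s > 0, 0 < f s)
    (hξ : 0 < ξ) : DifferentiableAt ℝ (deriv fun s => f s ^ m) ξ :=
  ((hf.rpow_const_of_ne fun s hs => (hpos s hs).ne').deriv_of_isOpen isOpen_Ioi
    (by norm_num : (1 : WithTop ℕ∞) + 1 ≤ 2)).differentiableOn (by norm_num)
    |>.differentiableAt (isOpen_Ioi.mem_nhds hξ)

end PhaseVariables

theorem stmt_4_general (N : ℕ) (m p σ α β : ℝ)
    (hm : 1 < m)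
    (hσ : σ = -2 * (p - 1) / (m - 1))
    (f : ℝ → ℝ) (hfpos : ∀ ξ > 0, 0 < f ξ)
    (hf : ContDiffOn ℝ 2 f (Set.Ioi 0))
    (hODE : ∀ ξ > (0 : ℝ),
      deriv (deriv fun s => f s ^ m) ξ
          + ((N : ℝ) - 1) / ξ * deriv (fun s => f s ^ m) ξ
          - α * f ξ + β * ξ * deriv f ξ + ξ ^ σ * f ξ ^ p = 0)
    (X Y : ℝ → ℝ)
    (hX : ∀ ξ, X ξ = m * ξ ^ (-2 : ℝ) * f ξ ^ (m - 1))
    (hY : ∀ ξ, Y ξ = m * ξ ^ (-1 : ℝ) * f ξ ^ (m - 2) * deriv f ξ) :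
    ∀ ξ > (0 : ℝ),
      deriv X ξ * (m * f ξ ^ (m - 1) / ξ) = X ξ * ((m - 1) * Y ξ - 2 * X ξ) ∧
      deriv Y ξ * (m * f ξ ^ (m - 1) / ξ) =
        -(Y ξ) ^ 2 - β * Y ξ + α * X ξ - N * X ξ * Y ξ
          - m ^ ((1 - p) / (m - 1)) * X ξ ^ ((m + p - 2) / (m - 1)) := by
  obtain rfl : X = phaseX m f := funext hX
  obtain rfl : Y = phaseY m f := funext hY
  intro ξ hξ
  have hfξ := hfpos ξ hξ
  have hfd : ∀ s > 0, DifferentiableAt ℝ f s := fun s hs =>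
    (hf.differentiableOn (by norm_num)).differentiableAt (isOpen_Ioi.mem_nhds hs)
  refine ⟨phaseX_deriv_mul hξ hfξ (hfd ξ hξ), ?_⟩
  have hYg : phaseY m f =ᶠ[𝓝 ξ] fun s => deriv (fun t => f t ^ m) s / (s * f s) := by
    filter_upwards [isOpen_Ioi.mem_nhds hξ] with s hs
    exact phaseY_eq_deriv_rpow_div (hfpos s hs) (hfd s hs)
  have hE := hODE ξ hξ
  rw [deriv_rpow_const (hfd ξ hξ) (.inl hfξ.ne')] at hE
  rw [phaseY_deriv_mul hξ hfξ (hfd ξ hξ) (differentiableAt_deriv_rpow hf hfpos hξ) hYg,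
    ← phaseX_mul_reaction hm hσ hξ hfξ, phaseX_eq_div, phaseY_eq_div hfξ]
  linear_combination (norm := skip) (m * f ξ ^ (m - 1) / ξ ^ 2 / f ξ) * hE
  field_simp
  ring

/-- The change of variables `X(ξ) = m ξ^{-2} f(ξ)^{m-1}`,
`Y(ξ) = m ξ^{-1} f(ξ)^{m-2} f'(ξ)`, `dη/dξ = ξ/(m f(ξ)^{m-1})` maps positive
`C²` solutions of the profile ODE to solutions of the autonomous system
`X' = X[(m-1)Y - 2X]`, `Y' = -Y² - βY + αX - NXY - m^{(1-p)/(m-1)} X^{(m+p-2)/(m-1)}`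
(the equations being written here in the `ξ` variable via the chain rule). -/
theorem stmt_4 (N : ℕ) (hN : 1 ≤ N) (m p σ α β : ℝ)
    (hm : 1 < m) (hp1 : 1 < p) (hpm : p < m)
    (hσ : σ = -2 * (p - 1) / (m - 1))
    (f : ℝ → ℝ) (hfpos : ∀ ξ > 0, 0 < f ξ)
    (hf : ContDiffOn ℝ 2 f (Set.Ioi 0))
    (hODE : ∀ ξ > (0 : ℝ),
      deriv (deriv fun s => f s ^ m) ξ
          + ((N : ℝ) - 1) / ξ * deriv (fun s => f s ^ m) ξ
          - α * f ξ + β * ξ * deriv f ξ + ξ ^ σ * f ξ ^ p = 0)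
    (X Y : ℝ → ℝ)
    (hX : ∀ ξ, X ξ = m * ξ ^ (-2 : ℝ) * f ξ ^ (m - 1))
    (hY : ∀ ξ, Y ξ = m * ξ ^ (-1 : ℝ) * f ξ ^ (m - 2) * deriv f ξ) :
    ∀ ξ > (0 : ℝ),
      deriv X ξ * (m * f ξ ^ (m - 1) / ξ) = X ξ * ((m - 1) * Y ξ - 2 * X ξ) ∧
      deriv Y ξ * (m * f ξ ^ (m - 1) / ξ) =
        -(Y ξ) ^ 2 - β * Y ξ + α * X ξ - N * X ξ * Y ξ
          - m ^ ((1 - p) / (m - 1)) * X ξ ^ ((m + p - 2) / (m - 1)) :=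
  stmt_4_general N m p σ α β hm hσ f hfpos hf hODE X Y hX hY
end

section
/- The first-order ODE f'(ξ) - (α/β) ξ^{-1} f(ξ) + (1/β) m^{(m+p-2)/(m-1)} ξ^{1-2(m+p-2)/(m-1)} f(ξ)^p = 0, with α/β = 2/(m-1), has the explicit family of solutions f(ξ) = (K + C(m,p,α)^{-(p-1)} log ξ)^{-1/(p-1)} ξ^{2/(m-1)} for constants K ∈ ℝ (on the interval where the bracket is positive), where C(m,p,α) = (α(m-1)/(2(p-1)))^{1/(p-1)} m^{-(m+p-2)/[(m-1)(p-1)]}. -/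
/-!
The ODE is of Bernoulli type, `f' = a ξ⁻¹ f - b ξ^s f^p` with `a = 2/(m-1)` and
`b = m^{(m+p-2)/(m-1)}/β`.
Writing `f = u^{-1/(p-1)} ξ^a`, it becomes `u' = (p-1) b ξ⁻¹` as soon as `s = -1 - a(p-1)`,
so `u = K + (p-1) b log ξ`; and the constant is chosen so that `C^{-(p-1)} = (p-1) b`.
-/

open Real Filter Topology

theorem hasDerivAt_rpow_log_mul_rpow {K A q a ξ : ℝ} (hξ : 0 < ξ) (hu : 0 < K + A * log ξ) :
    HasDerivAt (fun x => (K + A * log x) ^ q * x ^ a)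
      (a * ξ⁻¹ * ((K + A * log ξ) ^ q * ξ ^ a)
        + A * q * ξ⁻¹ * (K + A * log ξ) ^ (q - 1) * ξ ^ a) ξ := by
  have hlog : HasDerivAt (fun x => K + A * log x) (A * ξ⁻¹) ξ :=
    ((hasDerivAt_log hξ.ne').const_mul A).const_add K
  refine ((hlog.rpow_const (p := q) (Or.inl hu.ne')).mul
    (hasDerivAt_rpow_const (p := a) (Or.inl hξ.ne'))).congr_deriv ?_
  rw [rpow_sub_one hξ.ne']
  field_simp
  ring

theorem hasDerivAt_bernoulli_log_solution {p a b K ξ : ℝ} (hp : p ≠ 1) (hξ : 0 < ξ)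
    (hu : 0 < K + (p - 1) * b * log ξ) :
    HasDerivAt (fun x => (K + (p - 1) * b * log x) ^ (-1 / (p - 1)) * x ^ a)
      (a * ξ⁻¹ * ((K + (p - 1) * b * log ξ) ^ (-1 / (p - 1)) * ξ ^ a)
        - b * ξ ^ (-1 - a * (p - 1))
          * ((K + (p - 1) * b * log ξ) ^ (-1 / (p - 1)) * ξ ^ a) ^ p) ξ := by
  refine (hasDerivAt_rpow_log_mul_rpow hξ hu).congr_deriv ?_
  set u := K + (p - 1) * b * log ξ
  have hp1 : p - 1 ≠ 0 := sub_ne_zero.mpr hp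
  have hq : (p - 1) * (-1 / (p - 1)) = -1 := by field_simp
  have hpow : (u ^ (-1 / (p - 1)) * ξ ^ a) ^ p = u ^ (-1 / (p - 1) - 1) * ξ ^ (a * p) := by
    rw [mul_rpow (rpow_nonneg hu.le _) (rpow_nonneg hξ.le _), ← rpow_mul hu.le,
      ← rpow_mul hξ.le]
    congr 2
    field_simp
    ring
  have hξpow : ξ ^ (-1 - a * (p - 1)) * ξ ^ (a * p) = ξ⁻¹ * ξ ^ a := by
    rw [← rpow_add hξ, ← rpow_neg_one, ← rpow_add hξ]
    ring_nf
  rw [hpow]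
  linear_combination (b * u ^ (-1 / (p - 1) - 1)) * hξpow
    + (b * ξ⁻¹ * u ^ (-1 / (p - 1) - 1) * ξ ^ a) * hq

theorem rpow_neg_sub_one_of_rpow_one_div_sub_one_mul {x y c d p : ℝ} (hx : 0 < x) (hy : 0 < y)
    (hc : c ≠ 0) (hp : p ≠ 1) :
    (x ^ (1 / (p - 1)) * y ^ (-d / (c * (p - 1)))) ^ (-(p - 1)) = x⁻¹ * y ^ (d / c) := by
  have hp1 : p - 1 ≠ 0 := sub_ne_zero.mpr hp
  rw [mul_rpow (rpow_nonneg hx.le _) (rpow_nonneg hy.le _), ← rpow_mul hx.le, ← rpow_mul hy.le,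
    ← rpow_neg_one]
  congr 2 <;> field_simp

theorem stmt_10_general (m p α β : ℝ) (hm : 1 < m) (hp1 : 1 < p)
    (hα : 0 < α) (hβ : β = (m - 1) * α / 2)
    (C : ℝ)
    (hC : C = (α * (m - 1) / (2 * (p - 1))) ^ (1 / (p - 1))
      * m ^ (-(m + p - 2) / ((m - 1) * (p - 1))))
    (K : ℝ) (f : ℝ → ℝ)
    (hf : ∀ ξ > (0 : ℝ), f ξ =
      (K + C ^ (-(p - 1)) * Real.log ξ) ^ (-1 / (p - 1)) * ξ ^ (2 / (m - 1))) :
    ∀ ξ > (0 : ℝ), 0 < K + C ^ (-(p - 1)) * Real.log ξ →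
      HasDerivAt f
        (α / β * ξ⁻¹ * f ξ
          - 1 / β * m ^ ((m + p - 2) / (m - 1))
            * ξ ^ (1 - 2 * (m + p - 2) / (m - 1)) * f ξ ^ p) ξ := by
  intro ξ hξ hpos
  have hm1 : m - 1 ≠ 0 := by linarith
  have hA : C ^ (-(p - 1)) = (p - 1) * (1 / β * m ^ ((m + p - 2) / (m - 1))) := by
    rw [hC, rpow_neg_sub_one_of_rpow_one_div_sub_one_mul (by positivity) (by linarith) hm1 hp1.ne',
      hβ]
    field_simp
  have hαβ : α / β = 2 / (m - 1) := by
    rw [hβ]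
    field_simp
  have hexp : 1 - 2 * (m + p - 2) / (m - 1) = -1 - 2 / (m - 1) * (p - 1) := by
    field_simp
    ring
  have hfeq : f =ᶠ[𝓝 ξ]
      fun x => (K + C ^ (-(p - 1)) * log x) ^ (-1 / (p - 1)) * x ^ (2 / (m - 1)) :=
    eventually_of_mem (Ioi_mem_nhds hξ) hf
  rw [hf ξ hξ, hαβ, hexp]
  rw [hA] at hpos hfeq ⊢
  exact (hasDerivAt_bernoulli_log_solution hp1.ne' hξ hpos).congr_of_eventuallyEq hfeq

/-- The explicit functions `f(ξ) = (K + C^{-(p-1)} log ξ)^{-1/(p-1)} ξ^{2/(m-1)}`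
solve the first-order ODE
`f' - (α/β) ξ⁻¹ f + (1/β) m^{(m+p-2)/(m-1)} ξ^{1-2(m+p-2)/(m-1)} f^p = 0`
on the interval where the bracket is positive, with
`C = (α(m-1)/(2(p-1)))^{1/(p-1)} m^{-(m+p-2)/[(m-1)(p-1)]}`. -/
theorem stmt_10 (m p α β : ℝ) (hm : 1 < m) (hp1 : 1 < p) (hpm : p < m)
    (hα : 0 < α) (hβ : β = (m - 1) * α / 2)
    (C : ℝ)
    (hC : C = (α * (m - 1) / (2 * (p - 1))) ^ (1 / (p - 1))
      * m ^ (-(m + p - 2) / ((m - 1) * (p - 1))))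
    (K : ℝ) (f : ℝ → ℝ)
    (hf : ∀ ξ > (0 : ℝ), f ξ =
      (K + C ^ (-(p - 1)) * Real.log ξ) ^ (-1 / (p - 1)) * ξ ^ (2 / (m - 1))) :
    ∀ ξ > (0 : ℝ), 0 < K + C ^ (-(p - 1)) * Real.log ξ →
      HasDerivAt f
        (α / β * ξ⁻¹ * f ξ
          - 1 / β * m ^ ((m + p - 2) / (m - 1))
            * ξ ^ (1 - 2 * (m + p - 2) / (m - 1)) * f ξ ^ p) ξ :=
  stmt_10_general m p α β hm hp1 hα hβ C hC K f hf
end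

section
/- In the system dy/dτ = -(N-2)y - my² - m^{(1-p)/(m-1)} w, dw/dτ = (2(m-p)/(m-1)) w - (m-p) y w (the limit system as α → 0), the region D = {(y,w) : y < 0, m^{-(m+p-2)/(m-1)} w > max(-y² - (N-2)y/m, 0)} is positively invariant: the flow on the boundary pieces {y = 0, w > 0} and the parabola arc w = m^{(m+p-2)/(m-1)}(-y² - (N-2)y/m) (for y ∈ (-(N-2)/m, 0)) points into D. -/
/-!
With `c = m^{-(m+p-2)/(m-1)}`, `u = c w` and `G = u + y² + (N-2)y/m` (the height of `u` above the
parabola), the system reads `y' = -mG`, `u' = λu` and `G' = λu - (2my + N - 2)G`, where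
`λ = 2(m-p)/(m-1) - (m-p)y`. Being a solution of a linear equation, `u` cannot reach `0`. As long
as `G > 0`, `y` decreases and so stays negative, which makes `λ > 0`; hence at a first zero of `G`
we would have `G' = λu > 0`, which is impossible.
-/

open Real Set Filter Topology

theorem HasDerivAt.nonpos_of_forall_Ioo_le {f : ℝ → ℝ} {f' a z : ℝ} (hf : HasDerivAt f f' z)
    (haz : a < z) (hle : ∀ y ∈ Ioo a z, f z ≤ f y) : f' ≤ 0 := by
  have hslope : Tendsto (slope f z) (𝓝[<] z) (𝓝 f') :=
    (hasDerivAt_iff_tendsto_slope.1 hf).mono_left (nhdsWithin_mono _ fun _ hy => ne_of_lt hy)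
  refine le_of_tendsto hslope ?_
  filter_upwards [Ioo_mem_nhdsLT haz] with y hy
  rw [slope_def_field]
  exact div_nonpos_of_nonneg_of_nonpos (sub_nonneg.2 (hle y hy)) (sub_nonpos.2 hy.2.le)

theorem pos_of_deriv_pos_at_first_zero {f f' : ℝ → ℝ} {a b : ℝ}
    (hf : ∀ x ∈ Icc a b, HasDerivAt f (f' x) x) (ha : 0 < f a)
    (hzero : ∀ x ∈ Ioc a b, f x = 0 → (∀ y ∈ Ico a x, 0 < f y) → 0 < f' x) :
    ∀ x ∈ Icc a b, 0 < f x := by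
  by_contra! ⟨x, hx, hfx⟩
  have hcont : ContinuousOn f (Icc a x) := fun y hy =>
    (hf y ⟨hy.1, hy.2.trans hx.2⟩).continuousAt.continuousWithinAt
  have hS : IsCompact (Icc a x ∩ f ⁻¹' Iic 0) :=
    isCompact_Icc.of_isClosed_subset
      (hcont.preimage_isClosed_of_isClosed isClosed_Icc isClosed_Iic) inter_subset_left
  obtain ⟨z, ⟨hzI, hfz⟩, hzmin⟩ := hS.exists_isLeast ⟨x, right_mem_Icc.2 hx.1, hfx⟩
  have hzb : z ∈ Icc a b := ⟨hzI.1, hzI.2.trans hx.2⟩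
  have hpos : ∀ y ∈ Ico a z, 0 < f y := fun y hy => by
    by_contra! hfy
    exact hy.2.not_ge (hzmin ⟨⟨hy.1, hy.2.le.trans hzI.2⟩, hfy⟩)
  have haz : a < z := hzI.1.lt_of_ne (by rintro rfl; exact hfz.not_gt ha)
  have hz0 : f z = 0 := by
    refine le_antisymm hfz (ge_of_tendsto
      ((hf z hzb).continuousAt.mono_left (nhdsWithin_le_nhds (s := Iio z))) ?_)
    filter_upwards [Ioo_mem_nhdsLT haz] with y hy
    exact (hpos y ⟨hy.1.le, hy.2⟩).le
  refine (hzero z ⟨haz, hzb.2⟩ hz0 hpos).not_ge ((hf z hzb).nonpos_of_forall_Ioo_le haz ?_)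
  exact fun y hy => hz0 ▸ (hpos y ⟨hy.1.le, hy.2⟩).le

theorem le_of_hasDerivAt_nonpos {f f' : ℝ → ℝ} {a b : ℝ} (hab : a ≤ b)
    (hf : ∀ x ∈ Icc a b, HasDerivAt f (f' x) x) (hf' : ∀ x ∈ Ico a b, f' x ≤ 0) :
    f b ≤ f a :=
  image_le_of_deriv_right_le_deriv_boundary (B := fun _ => f a) (B' := 0)
    (fun x hx => (hf x hx).continuousAt.continuousWithinAt)
    (fun x hx => (hf x (Ico_subset_Icc_self hx)).hasDerivWithinAt) le_rfl continuousOn_const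
    (fun _ _ => hasDerivWithinAt_const _ _ _) hf' ⟨hab, le_rfl⟩

theorem eqOn_zero_of_hasDerivAt_mul_self {f a : ℝ → ℝ} {s t : ℝ}
    (ha : ContinuousOn a (Icc s t)) (hf : ∀ x ∈ Icc s t, HasDerivAt f (a x * f x) x)
    (ht : f t = 0) : EqOn f 0 (Icc s t) := by
  obtain ⟨C, hC⟩ := isCompact_Icc.exists_bound_of_continuousOn ha
  refine ODE_solution_unique_of_mem_Icc_left (v := fun x y => a x * y) (s := fun _ => univ)
    (K := C.toNNReal) (fun x hx => ?_) (fun x hx => (hf x hx).continuousAt.continuousWithinAt)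
    (fun x hx => (hf x (Ioc_subset_Icc_self hx)).hasDerivWithinAt) (fun _ _ => trivial)
    continuousOn_const (fun x _ => by
      simp only [Pi.zero_apply, mul_zero]; exact hasDerivWithinAt_const x (Iic x) (0 : ℝ))
    (fun _ _ => trivial) ht
  refine ((lipschitzWith_smul (a x)).weaken ?_).lipschitzOnWith
  rw [← NNReal.coe_le_coe, coe_nnnorm, Real.coe_toNNReal']
  exact (hC x (Ioc_subset_Icc_self hx)).trans (le_max_left _ _)

theorem pos_of_hasDerivAt_mul_self {f a : ℝ → ℝ} {s t : ℝ} (ha : ContinuousOn a (Icc s t))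
    (hf : ∀ x ∈ Icc s t, HasDerivAt f (a x * f x) x) (hs : 0 < f s) :
    ∀ x ∈ Icc s t, 0 < f x := by
  intro x hx
  by_contra! hfx
  have hsub : Icc s x ⊆ Icc s t := Icc_subset_Icc_right hx.2
  obtain ⟨z, hz, hfz⟩ := intermediate_value_Icc' hx.1
    (fun y hy => (hf y (hsub hy)).continuousAt.continuousWithinAt) ⟨hfx, hs.le⟩
  have hsz : Icc s z ⊆ Icc s t := Icc_subset_Icc_right (hz.2.trans hx.2)
  exact hs.ne' <| eqOn_zero_of_hasDerivAt_mul_self (ha.mono hsz) (fun y hy => hf y (hsz hy)) hfz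
    (left_mem_Icc.2 hz.1)

theorem rpow_one_sub_div_sub_one {m : ℝ} (p : ℝ) (hm : 0 < m) (hm1 : m ≠ 1) :
    m ^ ((1 - p) / (m - 1)) = m * m ^ (-(m + p - 2) / (m - 1)) := by
  have hexp : (1 - p) / (m - 1) = 1 + -(m + p - 2) / (m - 1) := by
    field_simp [sub_ne_zero.2 hm1]
    ring
  rw [hexp, rpow_add hm, rpow_one]

theorem rate_pos_of_neg {m p y : ℝ} (hm : 1 < m) (hpm : p < m) (hy : y < 0) :
    0 < 2 * (m - p) / (m - 1) - (m - p) * y := by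
  have : 0 < 2 * (m - p) / (m - 1) := div_pos (by linarith) (by linarith)
  nlinarith

theorem hasDerivAt_parabola_gap {k m c r : ℝ} {y w : ℝ → ℝ} {t : ℝ} (hm : m ≠ 0)
    (hy : HasDerivAt y (-(m * (c * w t + y t ^ 2 + k * y t / m))) t)
    (hw : HasDerivAt w (r * w t) t) :
    HasDerivAt (fun s => c * w s + y s ^ 2 + k * y s / m)
      (r * (c * w t) - (2 * m * y t + k) * (c * w t + y t ^ 2 + k * y t / m)) t := by
  refine (((hw.const_mul c).add (hy.pow 2)).add ((hy.const_mul k).div_const m)).congr_deriv ?_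
  field_simp
  ring

theorem stmt_13_general (N : ℕ) (m p : ℝ)
    (hm : 1 < m) (hpm : p < m)
    (D : Set (ℝ × ℝ))
    (hD : D = {q : ℝ × ℝ | q.1 < 0 ∧
      m ^ (-(m + p - 2) / (m - 1)) * q.2 >
        max (-q.1 ^ 2 - ((N : ℝ) - 2) * q.1 / m) 0})
    (y w : ℝ → ℝ) (τ₀ : ℝ)
    (hsys : ∀ τ ≥ τ₀,
      HasDerivAt y (-((N : ℝ) - 2) * y τ - m * y τ ^ 2
        - m ^ ((1 - p) / (m - 1)) * w τ) τ ∧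
      HasDerivAt w (2 * (m - p) / (m - 1) * w τ - (m - p) * y τ * w τ) τ)
    (hinit : (y τ₀, w τ₀) ∈ D) :
    ∀ τ ≥ τ₀, (y τ, w τ) ∈ D := by
  subst hD
  have hm0 : 0 < m := by linarith
  set c := m ^ (-(m + p - 2) / (m - 1))
  have hc : 0 < c := rpow_pos_of_pos hm0 _
  have hmc : m ^ ((1 - p) / (m - 1)) = m * c := rpow_one_sub_div_sub_one p hm0 hm.ne'
  set G : ℝ → ℝ := fun t => c * w t + y t ^ 2 + ((N : ℝ) - 2) * y t / m
  set rate : ℝ → ℝ := fun t => 2 * (m - p) / (m - 1) - (m - p) * y t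
  have hy : ∀ t ≥ τ₀, HasDerivAt y (-(m * G t)) t := fun t ht =>
    (hsys t ht).1.congr_deriv (by rw [hmc]; simp only [G]; field_simp; ring)
  have hw : ∀ t ≥ τ₀, HasDerivAt w (rate t * w t) t := fun t ht =>
    (hsys t ht).2.congr_deriv (by ring)
  have hy_le : ∀ x ≥ τ₀, (∀ t ∈ Ico τ₀ x, 0 ≤ G t) → y x ≤ y τ₀ := fun x hx hG =>
    le_of_hasDerivAt_nonpos hx (fun t ht => hy t ht.1) fun t ht => by
      simpa using mul_nonneg hm0.le (hG t ht)
  obtain ⟨hy0, hG0, hu0⟩ : y τ₀ < 0 ∧ _ < c * w τ₀ ∧ 0 < c * w τ₀ :=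
    ⟨hinit.1, max_lt_iff.1 hinit.2⟩
  intro T hT
  have hupos : ∀ t ∈ Icc τ₀ T, 0 < c * w t := fun t ht => mul_pos hc <|
    pos_of_hasDerivAt_mul_self (fun s hs => (continuousAt_const.sub
        (continuousAt_const.mul (hy s hs.1).continuousAt)).continuousWithinAt)
      (fun s hs => hw s hs.1) (pos_of_mul_pos_right hu0 hc.le) t ht
  have hGpos : ∀ t ∈ Icc τ₀ T, 0 < G t := by
    refine pos_of_deriv_pos_at_first_zero
      (f' := fun t => rate t * (c * w t) - (2 * m * y t + ((N : ℝ) - 2)) * G t)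
      (fun t ht => hasDerivAt_parabola_gap hm0.ne' (hy t ht.1) (hw t ht.1))
      (by linarith) fun x hx hGx hGpos => ?_
    have hyx : y x < 0 := (hy_le x hx.1.le fun t ht => (hGpos t ht).le).trans_lt hy0
    rw [hGx, mul_zero, sub_zero]
    exact mul_pos (rate_pos_of_neg hm hpm hyx) (hupos x ⟨hx.1.le, hx.2⟩)
  have hGT := hGpos T ⟨hT, le_rfl⟩
  exact ⟨(hy_le T hT fun t ht => (hGpos t ⟨ht.1, ht.2.le⟩).le).trans_lt hy0,
    max_lt_iff.2 ⟨by linarith, hupos T ⟨hT, le_rfl⟩⟩⟩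

/-- For the limit system (`α → 0`)
`y' = -(N-2)y - my² - m^{(1-p)/(m-1)} w`, `w' = (2(m-p)/(m-1))w - (m-p) y w`,
the region `D = {(y,w) : y < 0, m^{-(m+p-2)/(m-1)} w > max(-y² - (N-2)y/m, 0)}`
is positively invariant. -/
theorem stmt_13 (N : ℕ) (hN : 3 ≤ N) (m p : ℝ)
    (hm : 1 < m) (hp1 : 1 < p) (hpm : p < m)
    (D : Set (ℝ × ℝ))
    (hD : D = {q : ℝ × ℝ | q.1 < 0 ∧
      m ^ (-(m + p - 2) / (m - 1)) * q.2 >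
        max (-q.1 ^ 2 - ((N : ℝ) - 2) * q.1 / m) 0})
    (y w : ℝ → ℝ) (τ₀ : ℝ)
    (hsys : ∀ τ ≥ τ₀,
      HasDerivAt y (-((N : ℝ) - 2) * y τ - m * y τ ^ 2
        - m ^ ((1 - p) / (m - 1)) * w τ) τ ∧
      HasDerivAt w (2 * (m - p) / (m - 1) * w τ - (m - p) * y τ * w τ) τ)
    (hinit : (y τ₀, w τ₀) ∈ D) :
    ∀ τ ≥ τ₀, (y τ, w τ) ∈ D :=
  stmt_13_general N m p hm hpm D hD y w τ₀ hsys hinit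
end

section
/- For the system dX/dη = X[(m-1)Y - 2X], dY/dη = -Y² - Y + (2/(m-1))X - NXY - c X^{(m+p-2)/(m-1)} with c = m^{(1-p)/(m-1)}/β^{(m-p)/(m-1)} > 0, the half-plane {(m-1)Y - 2X < 0} is positively invariant: on the line (m-1)Y = 2X with X > 0, the quantity H = (m-1)·(dY/dη) - 2·(dX/dη) satisfies H = -[(m-1) + N(m-1)²/2] Y² - (m-1) c X^{(m+p-2)/(m-1)} < 0. -/
/-!
Along the system, `W = (m-1)Y - 2X` satisfies `W' = a·W - B` with
`a = -1 - 2X + N(m-1)Y/2` and `B = ((m-1) + N(m-1)²/2)Y² + (m-1)c X^{(m+p-2)/(m-1)} ≥ 0`.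
On the line `W = 0` this is the formula for `H`. Off the line, `W' ≤ a·W` with `a` bounded
on compact time intervals, so `W` stays below a negative exponential `W(η₀) e^{-L(η-η₀)}`.
-/

open Real Set

theorem forall_lt_zero_of_deriv_le_mul_self {W W' a : ℝ → ℝ} {t₀ : ℝ}
    (hW : ∀ t ≥ t₀, HasDerivAt W (W' t) t) (ha : ContinuousOn a (Ici t₀))
    (hW' : ∀ t ≥ t₀, W' t ≤ a t * W t) (h₀ : W t₀ < 0) : ∀ t ≥ t₀, W t < 0 := by
  intro T hT
  obtain ⟨K, hK⟩ := isCompact_Icc.exists_bound_of_continuousOn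
    (ha.mono (Icc_subset_Ici_self : Icc t₀ T ⊆ Ici t₀))
  set L := K + 1
  set B : ℝ → ℝ := fun t => W t₀ * exp (-L * (t - t₀))
  have hB_neg : ∀ t, B t < 0 := fun t => mul_neg_of_neg_of_pos h₀ (exp_pos _)
  have hB : ∀ t, HasDerivAt B (-L * B t) t := fun t =>
    ((((hasDerivAt_id t).sub_const t₀).const_mul (-L)).exp.const_mul (W t₀)).congr_deriv
      (by simp only [id, B]; ring)
  have hW_le_B : ∀ t ∈ Icc t₀ T, W t ≤ B t := by
    refine image_le_of_deriv_right_lt_deriv_boundary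
      (fun t ht => (hW t ht.1).continuousAt.continuousWithinAt)
      (fun t ht => (hW t ht.1).hasDerivWithinAt) (by simp [B]) hB ?_
    intro t ht hWB
    have ha_bound := hK t (Ico_subset_Icc_self ht)
    rw [norm_eq_abs] at ha_bound
    calc W' t ≤ a t * B t := hWB ▸ hW' t ht.1
      _ < -L * B t := by nlinarith [hB_neg t, neg_abs_le (a t)]
  exact (hW_le_B T ⟨hT, le_rfl⟩).trans_lt (hB_neg T)

theorem transversal_deriv_eq (N m c X Y Z : ℝ) (hm : m ≠ 1) :
    (m - 1) * (-Y ^ 2 - Y + 2 / (m - 1) * X - N * X * Y - c * Z)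
        - 2 * (X * ((m - 1) * Y - 2 * X)) =
      (-1 - 2 * X + N * (m - 1) * Y / 2) * ((m - 1) * Y - 2 * X)
        - (((m - 1) + N * (m - 1) ^ 2 / 2) * Y ^ 2 + (m - 1) * c * Z) := by
  have : m - 1 ≠ 0 := sub_ne_zero.mpr hm
  field_simp
  ring

theorem stmt_15_general (N : ℕ) (m p β c : ℝ)
    (hm : 1 < m) (hβ : 0 < β)
    (hc : c = m ^ ((1 - p) / (m - 1)) / β ^ ((m - p) / (m - 1))) :
    (∀ X Y : ℝ, 0 < X → (m - 1) * Y = 2 * X →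
      (m - 1) * (-Y ^ 2 - Y + 2 / (m - 1) * X - N * X * Y
          - c * X ^ ((m + p - 2) / (m - 1)))
        - 2 * (X * ((m - 1) * Y - 2 * X)) =
        -((m - 1) + (N : ℝ) * (m - 1) ^ 2 / 2) * Y ^ 2
          - (m - 1) * c * X ^ ((m + p - 2) / (m - 1)) ∧
      (m - 1) * (-Y ^ 2 - Y + 2 / (m - 1) * X - N * X * Y
          - c * X ^ ((m + p - 2) / (m - 1)))
        - 2 * (X * ((m - 1) * Y - 2 * X)) < 0) ∧
    (∀ (X Y : ℝ → ℝ) (η₀ : ℝ),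
      (∀ η ≥ η₀,
        HasDerivAt X (X η * ((m - 1) * Y η - 2 * X η)) η ∧
        HasDerivAt Y (-(Y η) ^ 2 - Y η + 2 / (m - 1) * X η - N * X η * Y η
          - c * X η ^ ((m + p - 2) / (m - 1))) η) →
      (∀ η ≥ η₀, 0 ≤ X η) →
      (m - 1) * Y η₀ - 2 * X η₀ < 0 →
      ∀ η ≥ η₀, (m - 1) * Y η - 2 * X η < 0) := by
  have hm1 : 0 < m - 1 := sub_pos.mpr hm
  have hc_pos : 0 < c := hc ▸ div_pos (rpow_pos_of_pos (by linarith) _) (rpow_pos_of_pos hβ _)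
  refine ⟨fun X Y hX hline => ?_, fun X Y η₀ hderiv hX hW₀ => ?_⟩
  · rw [transversal_deriv_eq _ _ _ _ _ _ hm.ne', sub_eq_zero.mpr hline]
    have hY2 : 0 ≤ ((m - 1) + N * (m - 1) ^ 2 / 2) * Y ^ 2 := by positivity
    have hZ := mul_pos (mul_pos hm1 hc_pos) (rpow_pos_of_pos hX ((m + p - 2) / (m - 1)))
    constructor
    · ring
    · linarith
  · have hXc : ContinuousOn X (Ici η₀) := fun t ht => (hderiv t ht).1.continuousAt.continuousWithinAt
    have hYc : ContinuousOn Y (Ici η₀) := fun t ht => (hderiv t ht).2.continuousAt.continuousWithinAt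
    refine forall_lt_zero_of_deriv_le_mul_self
      (fun t ht => ((hderiv t ht).2.const_mul (m - 1)).sub ((hderiv t ht).1.const_mul 2))
      (a := fun t => -1 - 2 * X t + N * (m - 1) * Y t / 2) (by fun_prop) (fun t ht => ?_) hW₀
    rw [transversal_deriv_eq _ _ _ _ _ _ hm.ne', sub_le_self_iff]
    have := rpow_nonneg (hX t ht) ((m + p - 2) / (m - 1))
    positivity

/-- For the system `X' = X[(m-1)Y - 2X]`,
`Y' = -Y² - Y + (2/(m-1))X - NXY - c X^{(m+p-2)/(m-1)}` with
`c = m^{(1-p)/(m-1)}/β^{(m-p)/(m-1)} > 0`, on the line `(m-1)Y = 2X`, `X > 0`,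
the quantity `H = (m-1)·Y' - 2·X'` satisfies
`H = -[(m-1) + N(m-1)²/2] Y² - (m-1) c X^{(m+p-2)/(m-1)} < 0`; consequently the
half-plane `{(m-1)Y - 2X < 0}` is positively invariant for solutions with
`X ≥ 0`. -/
theorem stmt_15 (N : ℕ) (hN : 1 ≤ N) (m p β c : ℝ)
    (hm : 1 < m) (hp1 : 1 < p) (hpm : p < m) (hβ : 0 < β)
    (hc : c = m ^ ((1 - p) / (m - 1)) / β ^ ((m - p) / (m - 1))) :
    (∀ X Y : ℝ, 0 < X → (m - 1) * Y = 2 * X →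
      (m - 1) * (-Y ^ 2 - Y + 2 / (m - 1) * X - N * X * Y
          - c * X ^ ((m + p - 2) / (m - 1)))
        - 2 * (X * ((m - 1) * Y - 2 * X)) =
        -((m - 1) + (N : ℝ) * (m - 1) ^ 2 / 2) * Y ^ 2
          - (m - 1) * c * X ^ ((m + p - 2) / (m - 1)) ∧
      (m - 1) * (-Y ^ 2 - Y + 2 / (m - 1) * X - N * X * Y
          - c * X ^ ((m + p - 2) / (m - 1)))
        - 2 * (X * ((m - 1) * Y - 2 * X)) < 0) ∧
    (∀ (X Y : ℝ → ℝ) (η₀ : ℝ),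
      (∀ η ≥ η₀,
        HasDerivAt X (X η * ((m - 1) * Y η - 2 * X η)) η ∧
        HasDerivAt Y (-(Y η) ^ 2 - Y η + 2 / (m - 1) * X η - N * X η * Y η
          - c * X η ^ ((m + p - 2) / (m - 1))) η) →
      (∀ η ≥ η₀, 0 ≤ X η) →
      (m - 1) * Y η₀ - 2 * X η₀ < 0 →
      ∀ η ≥ η₀, (m - 1) * Y η - 2 * X η < 0) :=
  stmt_15_general N m p β c hm hβ hc
end
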